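/- arXiv:1809.02436 — 3 statements merged into one kernel-verified Lean document; each statement's English description precedes it below -/
import Mathlib

section
/- Let T = (V_T, E_T, f) be a finite weighted tree with positive edge weights, and let d_T(x,y) denote the weighted length of the unique path between x and y in T. Let u, v, w, r be four vertices of T such that d_T(u,r) < d_T(w,r) and d_T(v,r) < d_T(w,r). Then it does not hold that w ≺ (u,v), where a ≺ (b,c) abbreviates d_T(a,b) < d_T(b,c) and d_T(a,c) < d_T(b,c). -/
/-!
Tree metrics satisfy the four-point condition
`d(u,v) + d(w,r) ≤ max (d(u,w) + d(v,r)) (d(u,r) + d(v,w))`, while the hypotheses make the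
left-hand side strictly larger than both sums on the right. The four-point condition is read off
the median of three vertices, the common vertex of the three paths between them.
-/

/-- The tree metric: the weighted length of the unique path between `x` and `y`
in the tree `G` with edge weights `f`. -/
noncomputable def treeDist {W : Type} (G : SimpleGraph W) (hG : G.IsTree) (f : Sym2 W → ℝ)
    (x y : W) : ℝ :=
  ((hG.existsUnique_path x y).choose.edges.map f).sum

namespace SimpleGraph.IsTree

section

variable {V : Type*} {G : SimpleGraph V} (hG : G.IsTree)

noncomputable def path (x y : V) : G.Walk x y := (hG.existsUnique_path x y).choose

theorem isPath_path (x y : V) : (hG.path x y).IsPath :=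
  (hG.existsUnique_path x y).choose_spec.1

theorem eq_path {x y : V} {p : G.Walk x y} (hp : p.IsPath) : p = hG.path x y :=
  (hG.existsUnique_path x y).unique hp (hG.isPath_path x y)

theorem support_path_subset {x y : V} (p : G.Walk x y) :
    (hG.path x y).support ⊆ p.support := by
  classical
  rw [← hG.eq_path p.bypass_isPath]
  exact p.support_bypass_subset_support

theorem mem_support_path_or {x y m : V} (hm : m ∈ (hG.path x y).support) (t : V) :
    m ∈ (hG.path x t).support ∨ m ∈ (hG.path t y).support :=
  (Walk.mem_support_append_iff _ _).1 (hG.support_path_subset _ hm)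

/- Induct along `p`: if `x` lies on the path from its neighbour `x'` to `z`, then `x` itself is a
median; otherwise the path from `x` to `z` runs through `x'`, and the median of `x'`, `y`, `z`
will do. -/
theorem exists_mem_support_path_of_isPath {x y : V} (z : V) {p : G.Walk x y}
    (hp : p.IsPath) :
    ∃ m ∈ p.support, m ∈ (hG.path x z).support ∧ m ∈ (hG.path y z).support := by
  induction p with
  | nil =>
    exact ⟨_, Walk.start_mem_support _, Walk.start_mem_support _, Walk.start_mem_support _⟩
  | @cons x x' y hadj p ih =>
    rw [Walk.cons_isPath_iff] at hp
    by_cases hx : x ∈ (hG.path x' z).support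
    · refine ⟨x, Walk.start_mem_support _, Walk.start_mem_support _, ?_⟩
      refine (hG.mem_support_path_or hx y).resolve_left fun hx' => hp.2 ?_
      rwa [← hG.eq_path hp.1] at hx'
    · obtain ⟨m, hmp, hmx', hmy⟩ := ih hp.1
      refine ⟨m, List.mem_cons_of_mem _ hmp, ?_, hmy⟩
      rw [← hG.eq_path ((hG.isPath_path x' z).cons hx (h := hadj)), Walk.support_cons]
      exact List.mem_cons_of_mem _ hmx'

theorem exists_median (x y z : V) : ∃ m, m ∈ (hG.path x y).support ∧
    m ∈ (hG.path x z).support ∧ m ∈ (hG.path y z).support :=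
  hG.exists_mem_support_path_of_isPath z (hG.isPath_path x y)

end

variable {V : Type} {G : SimpleGraph V} (hG : G.IsTree) (f : Sym2 V → ℝ)

theorem treeDist_eq_sum_of_isPath {x y : V} {p : G.Walk x y} (hp : p.IsPath) :
    treeDist G hG f x y = (p.edges.map f).sum := by
  rw [hG.eq_path hp]
  rfl

theorem treeDist_comm (x y : V) : treeDist G hG f x y = treeDist G hG f y x := by
  rw [hG.treeDist_eq_sum_of_isPath f (hG.isPath_path y x).reverse, Walk.edges_reverse,
    List.map_reverse, List.sum_reverse]
  rfl

theorem treeDist_eq_add_of_mem_support {x y m : V} (hm : m ∈ (hG.path x y).support) :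
    treeDist G hG f x y = treeDist G hG f x m + treeDist G hG f m y := by
  classical
  have hp := hG.isPath_path x y
  rw [hG.treeDist_eq_sum_of_isPath f (hp.takeUntil hm),
    hG.treeDist_eq_sum_of_isPath f (hp.dropUntil hm), ← List.sum_append, ← List.map_append,
    ← Walk.edges_append, Walk.take_spec]
  rfl

variable {f} (hf : ∀ e ∈ G.edgeSet, 0 ≤ f e)
include hf

theorem treeDist_nonneg (x y : V) : 0 ≤ treeDist G hG f x y :=
  List.sum_nonneg fun _ ha ↦ by
    obtain ⟨e, he, rfl⟩ := List.mem_map.1 ha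
    exact hf e ((hG.path x y).edges_subset_edgeSet he)

theorem treeDist_triangle (x y z : V) :
    treeDist G hG f x z ≤ treeDist G hG f x y + treeDist G hG f y z := by
  obtain ⟨m, hxy, hxz, hyz⟩ := hG.exists_median x y z
  rw [hG.treeDist_eq_add_of_mem_support f hxy, hG.treeDist_eq_add_of_mem_support f hxz,
    hG.treeDist_eq_add_of_mem_support f hyz, hG.treeDist_comm f y m]
  linarith [hG.treeDist_nonneg hf m y]

/- The four-point condition. For the median `m` of `x`, `y`, `z`, the vertex `t` reaches `x` or `y`
through `m`, and then one of the right-hand sums is `d(x,m) + d(y,m) + d(z,m) + d(m,t)`. -/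
theorem treeDist_add_le_max (x y z t : V) :
    treeDist G hG f x y + treeDist G hG f z t ≤
      max (treeDist G hG f x z + treeDist G hG f y t)
        (treeDist G hG f x t + treeDist G hG f y z) := by
  obtain ⟨m, hxy, hxz, hyz⟩ := hG.exists_median x y z
  have dxy := hG.treeDist_eq_add_of_mem_support f hxy
  have dxz := hG.treeDist_eq_add_of_mem_support f hxz
  have dyz := hG.treeDist_eq_add_of_mem_support f hyz
  have dzt := hG.treeDist_triangle hf z m t
  have dmz := hG.treeDist_comm f m z
  rcases hG.mem_support_path_or hxy t with hxt | hty
  · have dxt := hG.treeDist_eq_add_of_mem_support f hxt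
    exact le_max_of_le_right (by linarith [hG.treeDist_comm f y m])
  · have dty := hG.treeDist_eq_add_of_mem_support f hty
    exact le_max_of_le_left (by linarith [hG.treeDist_comm f t y, hG.treeDist_comm f t m])

end SimpleGraph.IsTree

theorem tree_metric_not_prec_general {W : Type} (G : SimpleGraph W) (hG : G.IsTree)
    (f : Sym2 W → ℝ) (hf : ∀ e ∈ G.edgeSet, 0 < f e)
    (u v w r : W)
    (hur : treeDist G hG f u r < treeDist G hG f w r)
    (hvr : treeDist G hG f v r < treeDist G hG f w r) :
    ¬ (treeDist G hG f w u < treeDist G hG f u v ∧ treeDist G hG f w v < treeDist G hG f u v) := by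
  rintro ⟨hwu, hwv⟩
  have h := hG.treeDist_add_le_max (fun e he ↦ (hf e he).le) u v w r
  rw [hG.treeDist_comm f w u] at hwu
  rw [hG.treeDist_comm f w v] at hwv
  rcases le_max_iff.1 h with h | h <;> linarith

/-- In a finite weighted tree with positive edge weights,
if `d(u,r) < d(w,r)` and `d(v,r) < d(w,r)`, then it does not hold that `w ≺ (u,v)`. -/
theorem tree_metric_not_prec {W : Type} [Fintype W] (G : SimpleGraph W) (hG : G.IsTree)
    (f : Sym2 W → ℝ) (hf : ∀ e ∈ G.edgeSet, 0 < f e)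
    (u v w r : W)
    (hur : treeDist G hG f u r < treeDist G hG f w r)
    (hvr : treeDist G hG f v r < treeDist G hG f w r) :
    ¬ (treeDist G hG f w u < treeDist G hG f u v ∧ treeDist G hG f w v < treeDist G hG f u v) :=
  tree_metric_not_prec_general G hG f hf u v w r hur hvr
end

section
/- Let (V, d_T) be a finite tree metric in which all pairwise distances between distinct pairs are distinct, and let MST(V, d_T) denote its unique minimum spanning tree over the complete graph on V with edge weights d_T. Let v, w be vertices of V and let v_0, v_1, ..., v_k with v_0 = v and v_k = w be the unique path from v to w in MST(V, d_T). Then for every i with 0 ≤ i ≤ k−1 it holds that d_T(v_i, v) < d_T(v_{i+1}, v). -/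
/-- `d` is a tree metric: it is the restriction to `V` of the path metric of a finite
weighted tree with positive edge weights. -/
def IsTreeMetric {V : Type} (d : V → V → ℝ) : Prop :=
  ∃ (W : Type) (_ : Fintype W) (G : SimpleGraph W) (hG : G.IsTree) (f : Sym2 W → ℝ)
    (ι : V → W), (∀ e ∈ G.edgeSet, 0 < f e) ∧ Function.Injective ι ∧
      ∀ x y, d x y = treeDist G hG f (ι x) (ι y)

/-- All pairwise distances between distinct pairs are distinct: two distinct pairs can only
have equal distance if they are the same unordered pair. -/
def DistinctDists {V : Type} (d : V → V → ℝ) : Prop :=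
  ∀ x y x' y' : V, x ≠ y → x' ≠ y' → d x y = d x' y' → s(x, y) = s(x', y')

/-- The weight of an unordered edge under the (symmetric) distance `d`. -/
noncomputable def sym2Weight {V : Type} (d : V → V → ℝ) : Sym2 V → ℝ :=
  Sym2.lift ⟨fun x y => (d x y + d y x) / 2, fun _ _ => by ring⟩

/-- The total `d`-weight of a finite set of edges. -/
noncomputable def edgesWeight {V : Type} (d : V → V → ℝ) (E : Finset (Sym2 V)) : ℝ :=
  ∑ e ∈ E, sym2Weight d e

/-- `E` is the edge set of a spanning tree on `V`: it has no loops and the resulting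
graph is connected and acyclic. -/
def IsSpanningTreeEdges {V : Type} (E : Set (Sym2 V)) : Prop :=
  (∀ e ∈ E, ¬ e.IsDiag) ∧ (SimpleGraph.fromEdgeSet E).IsTree

/-- `M` is a minimum spanning tree using only edges from `Base`, with edge weights `d`:
it is a spanning tree contained in `Base` minimizing the total weight among all such
spanning trees.  Taking `Base = Set.univ` gives the MST over the complete graph on `V`. -/
def IsMSTOver {V : Type} [Fintype V] [DecidableEq V] (d : V → V → ℝ)
    (Base : Set (Sym2 V)) (M : Finset (Sym2 V)) : Prop :=
  ↑M ⊆ Base ∧ IsSpanningTreeEdges (↑M : Set (Sym2 V)) ∧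
    ∀ E : Finset (Sym2 V), ↑E ⊆ Base → IsSpanningTreeEdges (↑E : Set (Sym2 V)) →
      edgesWeight d M ≤ edgesWeight d E

open SimpleGraph

namespace SimpleGraph

variable {V : Type*} {T : SimpleGraph V} {a b x y : V}

lemma Walk.IsPath.append {m : V} {q : T.Walk x m}
    {r : T.Walk m y} (hq : q.IsPath) (hr : r.IsPath)
    (h : ∀ u ∈ q.support, u ∈ r.support → u = m) : (q.append r).IsPath := by
  rw [isPath_def, support_append, List.nodup_append]
  refine ⟨hq.support_nodup, hr.support_nodup.tail, fun u hu _ hu' huv => ?_⟩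
  subst huv
  obtain rfl := h u hu (List.mem_of_mem_tail hu')
  have hnd := hr.support_nodup
  rw [← r.cons_tail_support] at hnd
  exact (List.nodup_cons.mp hnd).1 hu'

lemma IsTree.not_reachable_deleteEdges (hT : T.IsTree) (hab : T.Adj a b)
    (hx : (T.deleteEdges {s(a, b)}).Reachable x a)
    (hy : (T.deleteEdges {s(a, b)}).Reachable y b) :
    ¬ (T.deleteEdges {s(a, b)}).Reachable x y := fun h =>
  isAcyclic_iff_forall_adj_isBridge.mp hT.isAcyclic hab (hx.symm.trans (h.trans hy))

lemma IsTree.deleteEdges_sup_edge (hT : T.IsTree) (hab : T.Adj a b)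
    (hx : (T.deleteEdges {s(a, b)}).Reachable x a)
    (hy : (T.deleteEdges {s(a, b)}).Reachable y b) :
    (T.deleteEdges {s(a, b)} ⊔ edge x y).IsTree := by
  set D := T.deleteEdges {s(a, b)}
  have hxy := hT.not_reachable_deleteEdges hab hx hy
  have hle : D ≤ D ⊔ edge x y := le_sup_left
  have hab' : (D ⊔ edge x y).Reachable a b := by
    have hxy' : (D ⊔ edge x y).Adj x y :=
      Or.inr ((edge_adj ..).mpr ⟨Or.inl ⟨rfl, rfl⟩, fun h => hxy (h ▸ Reachable.refl x)⟩)
    exact (hx.mono hle).symm.trans (hxy'.reachable.trans (hy.mono hle))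
  have hadj : ∀ u v, T.Adj u v → (D ⊔ edge x y).Reachable u v := by
    intro u v huv
    by_cases he : s(u, v) = s(a, b)
    · rcases Sym2.eq_iff.mp he with ⟨rfl, rfl⟩ | ⟨rfl, rfl⟩
      exacts [hab', hab'.symm]
    · exact (deleteEdges_adj.mpr ⟨huv, he⟩).reachable.mono hle
  have := hT.connected.nonempty
  refine ⟨Connected.mk fun u v => ?_,
    (hT.isAcyclic.anti (deleteEdges_le _)).sup_edge_of_not_reachable hxy⟩
  exact Relation.reflTransGen_le_of_equivalence_of_le (reachable_is_equivalence _) hadj u v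
    ((reachable_iff_reflTransGen u v).mp (hT.connected.preconnected u v))

lemma Walk.IsPath.getVert_notMem_support_take {p : T.Walk x y} (hp : p.IsPath) {i j : ℕ}
    (hij : i < j) (hj : j ≤ p.length) : p.getVert j ∉ (p.take i).support := by
  rw [Walk.mem_support_iff_exists_getVert]
  rintro ⟨n, hn, -⟩
  rw [Walk.take_getVert] at hn
  have := hp.getVert_injOn (Set.mem_ofPred.mpr (by omega)) (Set.mem_ofPred.mpr hj) hn
  omega

end SimpleGraph

section TreeDist

variable {W : Type} {G : SimpleGraph W} (hG : G.IsTree) (f : Sym2 W → ℝ)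

lemma treeDist_eq_of_isPath {x y : W} (p : G.Walk x y) (hp : p.IsPath) :
    treeDist G hG f x y = (p.edges.map f).sum := by
  rw [treeDist, (hG.existsUnique_path x y).unique (hG.existsUnique_path x y).choose_spec.1 hp]

@[simp]
lemma treeDist_self (x : W) : treeDist G hG f x x = 0 := by
  simp [treeDist_eq_of_isPath hG f .nil .nil]

lemma treeDist_comm (x y : W) : treeDist G hG f x y = treeDist G hG f y x := by
  have hp := (hG.existsUnique_path y x).choose_spec.1
  rw [treeDist_eq_of_isPath hG f _ hp.reverse, treeDist, Walk.edges_reverse, List.map_reverse,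
    List.sum_reverse]

lemma treeDist_add_of_isPath_append {x m y : W} {q : G.Walk x m} {r : G.Walk m y}
    (h : (q.append r).IsPath) :
    treeDist G hG f x y = treeDist G hG f x m + treeDist G hG f m y := by
  rw [treeDist_eq_of_isPath hG f _ h, treeDist_eq_of_isPath hG f _ h.of_append_left,
    treeDist_eq_of_isPath hG f _ h.of_append_right, Walk.edges_append, List.map_append,
    List.sum_append]

lemma treeDist_add_of_mem_support [DecidableEq W] {x y m : W} {p : G.Walk x y} (hp : p.IsPath)
    (hm : m ∈ p.support) :
    treeDist G hG f x y = treeDist G hG f x m + treeDist G hG f m y := by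
  rw [← p.take_spec hm] at hp
  exact treeDist_add_of_isPath_append hG f hp

variable {f} (hf : ∀ e ∈ G.edgeSet, 0 < f e)
include hf

lemma treeDist_pos {x y : W} (hxy : x ≠ y) : 0 < treeDist G hG f x y := by
  obtain ⟨p, hp, -⟩ := hG.existsUnique_path x y
  rw [treeDist_eq_of_isPath hG f p hp]
  cases p with
  | nil => exact absurd rfl hxy
  | cons h q =>
    rw [Walk.edges_cons, List.map_cons, List.sum_cons]
    refine add_pos_of_pos_of_nonneg (hf _ h) (List.sum_nonneg fun a ha => ?_)
    obtain ⟨e, he, rfl⟩ := List.mem_map.mp ha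
    exact (hf e (q.edges_subset_edgeSet he)).le

lemma treeDist_nonneg (x y : W) : 0 ≤ treeDist G hG f x y := by
  rcases eq_or_ne x y with rfl | hxy
  · simp
  · exact (treeDist_pos hG hf hxy).le

/-- The vertex `m` of `P` closest to `z` is where the path from `z` joins `P`. -/
lemma exists_median [DecidableEq W] {x y : W} {P : G.Walk x y} (hP : P.IsPath) (z : W) :
    ∃ m ∈ P.support, treeDist G hG f z x = treeDist G hG f z m + treeDist G hG f m x ∧
      treeDist G hG f z y = treeDist G hG f z m + treeDist G hG f m y := by
  obtain ⟨m, hm, hmin⟩ := P.support.toFinset.exists_min_image (treeDist G hG f z)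
    ⟨x, by simp⟩
  rw [List.mem_toFinset] at hm
  obtain ⟨Q, hQ, -⟩ := hG.existsUnique_path z m
  have hfirst : ∀ u ∈ Q.support, u ∈ P.support → u = m := by
    intro u hu huP
    by_contra hum
    have hsplit := treeDist_add_of_mem_support hG f hQ hu
    have := hmin u (List.mem_toFinset.mpr huP)
    linarith [treeDist_pos hG hf hum]
  have h₁ : (Q.append (P.takeUntil m hm).reverse).IsPath :=
    hQ.append (hP.takeUntil hm).reverse fun u hu hu' =>
      hfirst u hu (P.support_takeUntil_subset_support hm (by simpa using hu'))
  have h₂ : (Q.append (P.dropUntil m hm)).IsPath :=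
    hQ.append (hP.dropUntil hm) fun u hu hu' =>
      hfirst u hu (P.support_dropUntil_subset_support hm hu')
  exact ⟨m, hm, treeDist_add_of_isPath_append hG f h₁, treeDist_add_of_isPath_append hG f h₂⟩

lemma treeDist_triangle (x y z : W) :
    treeDist G hG f x z ≤ treeDist G hG f x y + treeDist G hG f y z := by
  classical
  obtain ⟨p, hp, -⟩ := hG.existsUnique_path x z
  obtain ⟨m, hm, hyx, hyz⟩ := exists_median hG hf hp y
  rw [treeDist_add_of_mem_support hG f hp hm, treeDist_comm hG f x y, hyx, hyz]
  linarith [treeDist_nonneg hG hf y m, treeDist_comm hG f m y, treeDist_comm hG f m x]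

lemma treeDist_eq_sub_of_mem_support [DecidableEq W] {x y m₁ m₂ : W} {p : G.Walk x y}
    (hp : p.IsPath) (h₁ : m₁ ∈ p.support) (h₂ : m₂ ∈ p.support)
    (hle : treeDist G hG f x m₁ ≤ treeDist G hG f x m₂) :
    treeDist G hG f m₁ m₂ = treeDist G hG f x m₂ - treeDist G hG f x m₁ := by
  have hsplit := h₁
  rw [← p.take_spec h₂, Walk.mem_support_append_iff] at hsplit
  rcases hsplit with h | h
  · linarith [treeDist_add_of_mem_support hG f (hp.takeUntil h₂) h]
  · linarith [treeDist_add_of_mem_support hG f (hp.dropUntil h₂) h,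
      treeDist_add_of_mem_support hG f hp h₁, treeDist_add_of_mem_support hG f hp h₂,
      treeDist_nonneg hG hf m₂ m₁, treeDist_comm hG f m₁ m₂]

lemma treeDist_four_point (a p q r : W) :
    min (treeDist G hG f a p + treeDist G hG f a r - treeDist G hG f p r)
        (treeDist G hG f a q + treeDist G hG f a r - treeDist G hG f q r)
      ≤ treeDist G hG f a p + treeDist G hG f a q - treeDist G hG f p q := by
  classical
  set d := treeDist G hG f
  have hcomm := treeDist_comm hG f
  obtain ⟨P, hP, -⟩ := hG.existsUnique_path a r
  obtain ⟨m₁, hm₁, hpa, hpr⟩ := exists_median hG hf hP p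
  obtain ⟨m₂, hm₂, hqa, hqr⟩ := exists_median hG hf hP q
  have har₁ := treeDist_add_of_mem_support hG f hP hm₁
  have har₂ := treeDist_add_of_mem_support hG f hP hm₂
  -- `(p | r)_a = d a m₁` and `(q | r)_a = d a m₂`, while `(p | q)_a ≥ min (d a m₁) (d a m₂)`
  -- by the triangle inequality through `m₁` and `m₂`.
  have hpq := (treeDist_triangle hG hf p m₁ q).trans
    (add_le_add_right (treeDist_triangle hG hf m₁ m₂ q) _)
  rcases le_total (d a m₁) (d a m₂) with h | h
  · refine (min_le_left _ _).trans ?_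
    linarith [treeDist_eq_sub_of_mem_support hG hf hP hm₁ hm₂ h, hcomm a p, hcomm a q,
      hcomm p r, hcomm q r, hcomm m₁ a, hcomm m₂ a, hcomm m₁ p, hcomm m₂ q]
  · refine (min_le_right _ _).trans ?_
    linarith [treeDist_eq_sub_of_mem_support hG hf hP hm₂ hm₁ h, hcomm a p, hcomm a q,
      hcomm p r, hcomm q r, hcomm m₁ a, hcomm m₂ a, hcomm m₁ p, hcomm m₂ q, hcomm m₁ m₂]

end TreeDist

/-- `four_point` is the four-point condition `(p | q)_a ≥ min ((p | r)_a, (q | r)_a)` on the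
Gromov products `(p | q)_a = (d a p + d a q - d p q) / 2`. -/
structure IsFourPointMetric {V : Type*} (d : V → V → ℝ) : Prop where
  comm : ∀ x y, d x y = d y x
  self_eq_zero : ∀ x, d x x = 0
  pos_of_ne : ∀ x y, x ≠ y → 0 < d x y
  four_point : ∀ a p q r,
    min (d a p + d a r - d p r) (d a q + d a r - d q r) ≤ d a p + d a q - d p q

lemma IsTreeMetric.isFourPointMetric {V : Type} {d : V → V → ℝ} (h : IsTreeMetric d) :
    IsFourPointMetric d := by
  obtain ⟨W, _, G, hG, f, ι, hf, hι, hd⟩ := h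
  refine ⟨fun x y => ?_, fun x => ?_, fun x y hxy => ?_, fun a p q r => ?_⟩
  · rw [hd, hd, treeDist_comm]
  · rw [hd, treeDist_self]
  · rw [hd]; exact treeDist_pos hG hf (hι.ne hxy)
  · simp only [hd]; exact treeDist_four_point hG hf _ _ _ _

lemma sym2Weight_mk {V : Type} {d : V → V → ℝ} (hd : ∀ x y, d x y = d y x) (x y : V) :
    sym2Weight d s(x, y) = d x y := by
  simp only [sym2Weight, Sym2.lift_mk]
  rw [hd y x]
  ring

lemma fromEdgeSet_insert_erase {V : Type*} [DecidableEq V] (M : Finset (Sym2 V)) (e : Sym2 V)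
    (x y : V) :
    fromEdgeSet (↑(insert s(x, y) (M.erase e)) : Set (Sym2 V)) =
      (fromEdgeSet (M : Set (Sym2 V))).deleteEdges {e} ⊔ edge x y := by
  ext u v
  simp only [fromEdgeSet_adj, Finset.coe_insert, Finset.coe_erase, Set.mem_insert_iff,
    Set.mem_sdiff, Finset.mem_coe, Set.mem_singleton_iff, sup_adj, deleteEdges_adj, edge_adj,
    Sym2.eq_iff]
  tauto

section MST

variable {V : Type} [Fintype V] [DecidableEq V] {d : V → V → ℝ} {M : Finset (Sym2 V)}

/-- The cut property of minimum spanning trees. -/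
lemma IsMSTOver.dist_lt_of_reachable_deleteEdges (hM : IsMSTOver d Set.univ M)
    (hd : ∀ x y, d x y = d y x) (hdd : DistinctDists d) {a b x y : V}
    (hab : (fromEdgeSet (M : Set (Sym2 V))).Adj a b)
    (hx : ((fromEdgeSet (M : Set (Sym2 V))).deleteEdges {s(a, b)}).Reachable x a)
    (hy : ((fromEdgeSet (M : Set (Sym2 V))).deleteEdges {s(a, b)}).Reachable y b)
    (hne : s(x, y) ≠ s(a, b)) : d a b < d x y := by
  have hT := hM.2.1.2
  have hxy := hT.not_reachable_deleteEdges hab hx hy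
  have hxy' : x ≠ y := fun h => hxy (h ▸ Reachable.refl x)
  have habM : s(a, b) ∈ M := ((fromEdgeSet_adj _).mp hab).1
  have hxyM : s(x, y) ∉ M.erase s(a, b) := fun h => hxy <|
    (deleteEdges_adj.mpr ⟨(fromEdgeSet_adj _).mpr ⟨Finset.mem_of_mem_erase h, hxy'⟩,
      show s(x, y) ∉ ({s(a, b)} : Set (Sym2 V)) from Finset.ne_of_mem_erase h⟩).reachable
  have hspan : IsSpanningTreeEdges (↑(insert s(x, y) (M.erase s(a, b))) : Set (Sym2 V)) := by
    refine ⟨fun e he => ?_, ?_⟩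
    · rcases Finset.mem_insert.mp he with rfl | he
      · simpa using hxy'
      · exact hM.2.1.1 e (Finset.mem_of_mem_erase he)
    · rw [fromEdgeSet_insert_erase]
      exact hT.deleteEdges_sup_edge hab hx hy
  have hmin := hM.2.2 _ (Set.subset_univ _) hspan
  rw [edgesWeight, edgesWeight, Finset.sum_insert hxyM, ← Finset.add_sum_erase M _ habM,
    sym2Weight_mk hd, sym2Weight_mk hd] at hmin
  exact (le_of_add_le_add_right hmin).lt_of_ne fun h => hne (hdd a b x y hab.ne hxy' h).symm

lemma IsMSTOver.dist_lt_of_isPath (hM : IsMSTOver d Set.univ M) (hd : IsFourPointMetric d)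
    (hdd : DistinctDists d) {a b x : V} (hab : (fromEdgeSet (M : Set (Sym2 V))).Adj a b)
    {p : (fromEdgeSet (M : Set (Sym2 V))).Walk x a} (hp : p.IsPath) (hb : b ∉ p.support) :
    d x a < d x b := by
  induction p with
  | nil => rw [hd.self_eq_zero]; exact hd.pos_of_ne _ _ hab.ne
  | @cons x u a hxu q ih =>
    rw [Walk.cons_isPath_iff] at hp
    rw [Walk.support_cons, List.mem_cons, not_or] at hb
    have hx_ne_u := hxu.ne
    have ha_ne_b := hab.ne
    have hu_ne_b : u ≠ b := fun h => hb.2 (h ▸ q.start_mem_support)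
    by_cases hua : u = a
    · subst hua
      refine hM.dist_lt_of_reachable_deleteEdges hd.comm hdd hxu (Reachable.refl x)
        (deleteEdges_adj.mpr ⟨hab.symm, ?_⟩).reachable ?_ <;>
      · simp only [ne_eq, Set.mem_singleton_iff, Sym2.eq_iff]
        tauto
    · have hxua : d x u < d x a := by
        refine hM.dist_lt_of_reachable_deleteEdges hd.comm hdd hxu (Reachable.refl x)
          (reachable_deleteEdges_iff_exists_walk.mpr
            ⟨q, fun h => hp.2 (q.fst_mem_support_of_mem_edges h)⟩).symm ?_
        simp only [ne_eq, Sym2.eq_iff]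
        tauto
      have habu : d a b < d u b := by
        refine hM.dist_lt_of_reachable_deleteEdges hd.comm hdd hab
          (reachable_deleteEdges_iff_exists_walk.mpr
            ⟨q, fun h => hb.2 (q.snd_mem_support_of_mem_edges h)⟩) (Reachable.refl b) ?_
        simp only [ne_eq, Sym2.eq_iff]
        tauto
      have huab : d u a < d u b := ih hab hp.1 hb.2
      -- `d x b ≤ d x a` would violate the four-point condition at `a` for `u, b, x`.
      by_contra hba
      rcases min_le_iff.mp (hd.four_point a u b x) with h | h <;>
        linarith [hd.comm a u, hd.comm a x, hd.comm u x, hd.comm b x]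

end MST

/-- On the unique path `v = v₀, v₁, …, v_k = w` from `v` to `w` in the MST of a
tree metric with pairwise distinct distances, the distance to `v` strictly increases:
`d(vᵢ, v) < d(vᵢ₊₁, v)` for all `0 ≤ i ≤ k - 1`. -/
theorem mst_path_monotone_dist {V : Type} [Fintype V] [DecidableEq V] (d : V → V → ℝ)
    (htm : IsTreeMetric d) (hdd : DistinctDists d)
    (M : Finset (Sym2 V)) (hM : IsMSTOver d Set.univ M)
    (v w : V) (p : (SimpleGraph.fromEdgeSet (↑M : Set (Sym2 V))).Walk v w) (hp : p.IsPath)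
    (i : ℕ) (hi : i < p.length) :
    d (p.getVert i) v < d (p.getVert (i + 1)) v := by
  have hd := htm.isFourPointMetric
  rw [hd.comm _ v, hd.comm _ v]
  exact hM.dist_lt_of_isPath hd hdd (p.adj_getVert_succ hi) (hp.take i)
    (hp.getVert_notMem_support_take (Nat.lt_succ_self i) hi)
end

section
/- Let (V, d) be any finite metric space in which all pairwise distances between distinct pairs are distinct, and let MST(V, d) denote its unique minimum spanning tree over the complete graph on V with edge weights d. If {v, w} is an edge of MST(V, d), then there is no vertex u ∈ V with u ≺ (v,w), i.e., no u with d(u,v) < d(v,w) and d(u,w) < d(v,w). -/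
/-!
Deleting an edge `{v, w}` of a spanning tree leaves two components, one containing `v` and one
containing `w`. If `u` lies in the component of `w`, then exchanging `{v, w}` for `{u, v}` gives
another spanning tree, so minimality forces `d(v, w) ≤ d(u, v)`; if `u` lies in the component
of `v`, exchanging for `{u, w}` forces `d(v, w) ≤ d(u, w)`.
-/

namespace SimpleGraph

variable {V : Type} {G : SimpleGraph V}

lemma Preconnected.reachable_deleteEdges_or (hG : G.Preconnected) (v w x : V) :
    (G.deleteEdges {s(v, w)}).Reachable x v ∨ (G.deleteEdges {s(v, w)}).Reachable x w := by
  induction (reachable_iff_reflTransGen x v).mp (hG x v)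
    using Relation.ReflTransGen.head_induction_on with
  | refl => exact Or.inl .rfl
  | @head a b hab _ ih =>
    by_cases he : s(a, b) = s(v, w)
    · rcases Sym2.eq_iff.mp he with ⟨rfl, -⟩ | ⟨rfl, -⟩
      exacts [Or.inl .rfl, Or.inr .rfl]
    · have hab' : (G.deleteEdges {s(v, w)}).Adj a b := (deleteEdges_adj ..).mpr ⟨hab, he⟩
      exact ih.imp hab'.reachable.trans hab'.reachable.trans

lemma IsTree.not_reachable_deleteEdges_s5 (hG : G.IsTree) {u v w : V} (hvw : G.Adj v w)
    (huw : (G.deleteEdges {s(v, w)}).Reachable u w) :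
    ¬ (G.deleteEdges {s(v, w)}).Reachable u v := fun huv =>
  isBridge_iff.mp (isAcyclic_iff_forall_adj_isBridge.mp hG.isAcyclic hvw) (huv.symm.trans huw)

lemma IsTree.deleteEdges_sup_edge_s5 (hG : G.IsTree) {u v w : V} (hvw : G.Adj v w)
    (huw : (G.deleteEdges {s(v, w)}).Reachable u w) :
    (G.deleteEdges {s(v, w)} ⊔ edge u v).IsTree := by
  have huv := hG.not_reachable_deleteEdges_s5 hvw huw
  refine ⟨(connected_iff_exists_forall_reachable _).mpr ⟨v, fun x => ?_⟩,
    (hG.isAcyclic.anti (deleteEdges_le _)).sup_edge_of_not_reachable huv⟩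
  have hedge : (G.deleteEdges {s(v, w)} ⊔ edge u v).Reachable u v :=
    Adj.reachable (Or.inr ((edge_adj ..).mpr ⟨Or.inl ⟨rfl, rfl⟩, fun h => huv (h ▸ .rfl)⟩))
  refine Reachable.symm ?_
  rcases hG.connected.preconnected.reachable_deleteEdges_or v w x with hx | hx
  · exact hx.mono le_sup_left
  · exact ((hx.trans huw.symm).mono le_sup_left).trans hedge

lemma fromEdgeSet_insert_erase [DecidableEq V] (M : Finset (Sym2 V)) (u v : V) (f : Sym2 V) :
    fromEdgeSet ↑(insert s(u, v) (M.erase f)) = (fromEdgeSet ↑M).deleteEdges {f} ⊔ edge u v := by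
  rw [Finset.coe_insert, Finset.coe_erase, Set.insert_eq, fromEdgeSet_union,
    fromEdgeSet_sdiff, sup_comm]
  rfl

end SimpleGraph

lemma edgesWeight_insert_erase {V : Type} [DecidableEq V] (d : V → V → ℝ)
    {M : Finset (Sym2 V)} {e f : Sym2 V} (hf : f ∈ M) (he : e ∉ M.erase f) :
    edgesWeight d (insert e (M.erase f)) = edgesWeight d M - sym2Weight d f + sym2Weight d e := by
  rw [edgesWeight, Finset.sum_insert he, Finset.sum_erase_eq_sub hf, edgesWeight]
  ring

lemma sym2Weight_dist {V : Type} [PseudoMetricSpace V] (x y : V) :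
    sym2Weight (fun x y : V => dist x y) s(x, y) = dist x y := by
  simp only [sym2Weight, Sym2.lift_mk, dist_comm y x, add_self_div_two]

open SimpleGraph in
lemma IsMSTOver.sym2Weight_le_of_reachable_deleteEdges {V : Type} [Fintype V] [DecidableEq V]
    {d : V → V → ℝ} {M : Finset (Sym2 V)} (hM : IsMSTOver d Set.univ M) {u v w : V}
    (hvw : s(v, w) ∈ M)
    (huw : ((fromEdgeSet (M : Set (Sym2 V))).deleteEdges {s(v, w)}).Reachable u w) :
    sym2Weight d s(v, w) ≤ sym2Weight d s(u, v) := by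
  obtain ⟨-, ⟨hloop, hT⟩, hmin⟩ := hM
  have hadj : (fromEdgeSet (M : Set (Sym2 V))).Adj v w :=
    (fromEdgeSet_adj _).mpr ⟨hvw, fun h => hloop _ hvw (Sym2.mk_isDiag_iff.mpr h)⟩
  have huv := hT.not_reachable_deleteEdges_s5 hadj huw
  have hne : u ≠ v := fun h => huv (h ▸ .rfl)
  have hnew : s(u, v) ∉ M.erase s(v, w) := fun h => huv <| Adj.reachable <|
    (deleteEdges_adj ..).mpr ⟨(fromEdgeSet_adj _).mpr ⟨Finset.mem_of_mem_erase h, hne⟩,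
      Finset.ne_of_mem_erase h⟩
  have hspan : IsSpanningTreeEdges (↑(insert s(u, v) (M.erase s(v, w))) : Set (Sym2 V)) := by
    refine ⟨fun e he => ?_, fromEdgeSet_insert_erase M u v _ ▸ hT.deleteEdges_sup_edge_s5 hadj huw⟩
    rcases Finset.mem_insert.mp he with rfl | he
    · exact fun h => hne (Sym2.mk_isDiag_iff.mp h)
    · exact hloop e (Finset.mem_of_mem_erase he)
  have hle := hmin _ (Set.subset_univ _) hspan
  rw [edgesWeight_insert_erase d hvw hnew] at hle
  linarith

theorem mst_edge_no_relative_neighbor_general {V : Type} [Fintype V] [DecidableEq V] [MetricSpace V]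
    (M : Finset (Sym2 V)) (hM : IsMSTOver (fun x y : V => dist x y) Set.univ M)
    (v w : V) (hvw : s(v, w) ∈ M) :
    ¬ ∃ u : V, dist u v < dist v w ∧ dist u w < dist v w := by
  rintro ⟨u, huv, huw⟩
  rcases hM.2.1.2.connected.preconnected.reachable_deleteEdges_or v w u with hu | hu
  · have hle := hM.sym2Weight_le_of_reachable_deleteEdges (u := u) (Sym2.eq_swap ▸ hvw)
      (Sym2.eq_swap ▸ hu)
    rw [sym2Weight_dist, sym2Weight_dist, dist_comm w v] at hle
    linarith
  · have hle := hM.sym2Weight_le_of_reachable_deleteEdges hvw hu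
    rw [sym2Weight_dist, sym2Weight_dist] at hle
    linarith

/-- In any finite metric space with pairwise distinct distances, if `{v,w}` is an
edge of the minimum spanning tree then no vertex `u` satisfies `u ≺ (v,w)`, i.e. no `u` with
`dist u v < dist v w` and `dist u w < dist v w`. -/
theorem mst_edge_no_relative_neighbor {V : Type} [Fintype V] [DecidableEq V] [MetricSpace V]
    (hdd : DistinctDists (fun x y : V => dist x y))
    (M : Finset (Sym2 V)) (hM : IsMSTOver (fun x y : V => dist x y) Set.univ M)
    (v w : V) (hvw : s(v, w) ∈ M) :
    ¬ ∃ u : V, dist u v < dist v w ∧ dist u w < dist v w :=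
  mst_edge_no_relative_neighbor_general M hM v w hvw
end
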